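/- arXiv:1910.12175 — 4 statements merged into one kernel-verified Lean document; each statement's English description precedes it below -/
import Mathlib

section
/- Let p = (2w+1)·2^u for non-negative integers w, u. Then for every integer p' with p < p' < p + 2^{u+1}, there exists an integer v with 0 ≤ v ≤ u such that p = 2^v · ⌊p'/2^v⌋ − 2^v. -/
/-- Removing meeting points, part 1: for `p = (2w+1)·2^u` and any `p'` with
`p < p' < p + 2^(u+1)`, there is `v ≤ u` with `p = 2^v * ⌊p'/2^v⌋ - 2^v`. -/
theorem removing_meeting_points_part1 (w u p : ℕ) (hp : p = (2 * w + 1) * 2 ^ u) :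
    ∀ p' : ℕ, p < p' → p' < p + 2 ^ (u + 1) →
      ∃ v : ℕ, v ≤ u ∧ p = 2 ^ v * (p' / 2 ^ v) - 2 ^ v := by
  intro p' h1 h2
  set r := p' - p with hr
  have hr0 : r ≠ 0 := by omega
  set v := Nat.log 2 r with hv
  have hle : 2 ^ v ≤ r := Nat.pow_log_le_self 2 hr0
  have hlt : r < 2 ^ (v + 1) := Nat.lt_pow_succ_log_self (by norm_num) r
  have hru : r < 2 ^ (u + 1) := by omega
  have hvu : v ≤ u := by
    by_contra h
    have : 2 ^ (u + 1) ≤ 2 ^ v := Nat.pow_le_pow_right (by norm_num) (by omega)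
    omega
  refine ⟨v, hvu, ?_⟩
  have hdvd : 2 ^ v ∣ p := by
    rw [hp]
    exact Dvd.dvd.mul_left (pow_dvd_pow 2 hvu) _
  have hrdiv : r / 2 ^ v = 1 := by
    exact Nat.div_eq_of_lt_le (by simpa using hle) (by simpa [two_mul, pow_succ, mul_comm] using hlt)
  have hp' : p' = p + r := by omega
  rw [hp', Nat.add_div_of_dvd_right hdvd, hrdiv, Nat.mul_add,
    Nat.mul_div_cancel' hdvd, mul_one]
  omega
end

section
/- Let p = (2w+1)·2^u for non-negative integers w, u. Then for every integer p' ≥ p + 2^{u+1}, there is no integer v ≥ 0 such that p = 2^v · ⌊p'/2^v⌋ − 2^v. -/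
/-- Removing meeting points, part 2: for `p = (2w+1)·2^u` and any `p' ≥ p + 2^(u+1)`,
there is no `v ≥ 0` with `p = 2^v * ⌊p'/2^v⌋ - 2^v`. -/
theorem removing_meeting_points_part2 (w u p : ℕ) (hp : p = (2 * w + 1) * 2 ^ u) :
    ∀ p' : ℕ, p + 2 ^ (u + 1) ≤ p' →
      ¬ ∃ v : ℕ, p = 2 ^ v * (p' / 2 ^ v) - 2 ^ v := by
  rintro p' hle ⟨v, hv⟩
  have hpos : 0 < p := by subst hp; positivity
  have hq : 2 ^ v * (p' / 2 ^ v) + p' % 2 ^ v = p' := Nat.div_add_mod p' (2 ^ v)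
  have hr : p' % 2 ^ v < 2 ^ v := Nat.mod_lt _ (by positivity)
  rcases hk : p' / 2 ^ v with _ | k
  · rw [hk] at hv; simp at hv; omega
  · rw [hk] at hv hq
    have hpk : p = 2 ^ v * k := by
      rw [Nat.mul_succ] at hv; omega
    have huv : u + 1 ≤ v := by
      by_contra h
      have hvu : v ≤ u := by omega
      have : 2 ^ v ≤ 2 ^ u := Nat.pow_le_pow_right (by norm_num) hvu
      have h2 : 2 ^ (u + 1) = 2 ^ u + 2 ^ u := by ring
      rw [Nat.mul_succ] at hq
      omega
    have hdvd : 2 ^ (u + 1) ∣ p := by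
      rw [hpk]
      exact Dvd.dvd.mul_right (pow_dvd_pow 2 huv) k
    obtain ⟨m, hm⟩ := hdvd
    rw [hp, pow_succ] at hm
    have : 2 * w + 1 = 2 * m := by
      have h2 : (2 * w + 1) * 2 ^ u = 2 * m * 2 ^ u := by rw [hm]; ring
      exact Nat.eq_of_mul_eq_mul_right (by positivity) h2
    omega
end

section
/- For every positive integer P and every integer k ≥ 2 that is a power of two, either P = k·⌊P/k⌋, or there exists a power of two k' with 1 ≤ k' < k such that k·⌊P/k⌋ = k'·⌊P/k'⌋ − k'. -/
/-- `MP1` is either the current position or an `MP2` at a strictly smaller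
power-of-two scale: for `P > 0` and a power of two `k ≥ 2`, either `P = k·⌊P/k⌋`,
or there is a power of two `k'` with `1 ≤ k' < k` and `k·⌊P/k⌋ = k'·⌊P/k'⌋ - k'`. -/
theorem MP1_eq_pos_or_MP2 (P k : ℕ) (hP : 0 < P) (hk : 2 ≤ k) (hpow : ∃ j : ℕ, k = 2 ^ j) :
    P = k * (P / k) ∨
      ∃ k' : ℕ, (∃ j : ℕ, k' = 2 ^ j) ∧ 1 ≤ k' ∧ k' < k ∧
        k * (P / k) = k' * (P / k') - k' := by
  obtain ⟨j, rfl⟩ := hpow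
  rcases Nat.eq_zero_or_pos (P % 2 ^ j) with h0 | hr
  · left
    have := Nat.div_add_mod P (2 ^ j)
    omega
  · right
    set r := P % 2 ^ j with hrdef
    set t := Nat.log 2 r with htdef
    have h1 : 2 ^ t ≤ r := Nat.pow_log_le_self 2 (by omega)
    have h2 : r < 2 ^ (t + 1) := Nat.lt_pow_succ_log_self (by norm_num) r
    have hrk : r < 2 ^ j := Nat.mod_lt _ (by positivity)
    have htj : t < j := by
      by_contra h
      push_neg at h
      have : 2 ^ j ≤ 2 ^ t := Nat.pow_le_pow_right (by norm_num) h
      omega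
    have hsplit : 2 ^ t * 2 ^ (j - t) = 2 ^ j := by
      rw [← pow_add]; congr 1; omega
    refine ⟨2 ^ t, ⟨t, rfl⟩, Nat.one_le_two_pow,
      Nat.pow_lt_pow_right (by norm_num) htj, ?_⟩
    have hP' : P = r + 2 ^ t * (2 ^ (j - t) * (P / 2 ^ j)) := by
      have hd := Nat.div_add_mod P (2 ^ j)
      rw [← mul_assoc, hsplit]
      omega
    have hdiv : P / 2 ^ t = 1 + 2 ^ (j - t) * (P / 2 ^ j) := by
      conv_lhs => rw [hP']
      rw [Nat.add_mul_div_left _ _ (by positivity)]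
      congr 1
      apply Nat.div_eq_of_lt_le (by simpa using h1)
      have : 2 ^ (t + 1) = 2 * 2 ^ t := by ring
      omega
    rw [hdiv, Nat.mul_add, mul_one, ← mul_assoc, hsplit]
    omega
end

section
/- Let k = 2^u be a power of two and suppose m+1 parties have positions P_0, …, P_m and there is a common value L with w·k ≤ L < (w+1)·k for some non-negative integer w, and each P_i satisfies L ≤ P_i and Σ_i (P_i − L) < k. Then for every party i, w·k belongs to {k·⌊P_i/k⌋, k·⌊P_i/k⌋ − k} and w·k ≤ L. -/
/-!
Every position lies in `[L, L + k)`, because a single disagreement `P i - L` is at most the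
total one. Hence `⌊P i / k⌋` is `⌊L / k⌋ = w` or `w + 1`, and the meeting point `w * k` is
`k * ⌊P i / k⌋` or one block of `k` below it.
-/

theorem Nat.div_eq_or_eq_succ_of_le_of_lt_add {a b k : ℕ} (hab : a ≤ b) (hb : b < a + k) :
    b / k = a / k ∨ b / k = a / k + 1 := by
  have hk : 0 < k := by omega
  have h_lower : a / k ≤ b / k := Nat.div_le_div_right hab
  have h_upper : b / k ≤ a / k + 1 := Nat.add_div_right a hk ▸ Nat.div_le_div_right hb.le
  omega

theorem Nat.mul_eq_or_eq_sub_of_div_eq_or_eq_succ {w k p : ℕ} (h : p / k = w ∨ p / k = w + 1) :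
    w * k = k * (p / k) ∨ w * k = k * (p / k) - k := by
  rcases h with h | h
  · exact Or.inl (by rw [h, Nat.mul_comm])
  · exact Or.inr (by rw [h, Nat.mul_add_one, Nat.add_sub_cancel, Nat.mul_comm])

theorem true_meeting_point_general (m w L : ℕ) (k : ℕ)
    (P : Fin (m + 1) → ℕ)
    (hL1 : w * k ≤ L) (hL2 : L < (w + 1) * k)
    (hP : ∀ i, L ≤ P i)
    (hD : (∑ i, (P i - L)) < k) :
    ∀ i, (w * k = k * (P i / k) ∨ w * k = k * (P i / k) - k) ∧ w * k ≤ L := by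
  intro i
  have hLk : L / k = w := Nat.div_eq_of_lt_le hL1 hL2
  have hPi : P i < L + k := by
    have : P i - L ≤ ∑ j, (P j - L) :=
      Finset.single_le_sum_of_canonicallyOrdered (f := fun j ↦ P j - L) (Finset.mem_univ i)
    have := hP i
    omega
  refine ⟨Nat.mul_eq_or_eq_sub_of_div_eq_or_eq_succ ?_, hL1⟩
  rw [← hLk]
  exact Nat.div_eq_or_eq_succ_of_le_of_lt_add (hP i) hPi

/-- True meeting point lemma: if `k = 2^u`, `w·k ≤ L < (w+1)·k`, each party's position
satisfies `L ≤ P i`, and the total disagreement `Σ i (P i - L) < k`, then for every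
party `i`, `w·k` is one of the two scale-`k` meeting points `k·⌊P i/k⌋` or
`k·⌊P i/k⌋ - k`, and `w·k ≤ L`. -/
theorem true_meeting_point (m u w L : ℕ) (k : ℕ) (hk : k = 2 ^ u)
    (P : Fin (m + 1) → ℕ)
    (hL1 : w * k ≤ L) (hL2 : L < (w + 1) * k)
    (hP : ∀ i, L ≤ P i)
    (hD : (∑ i, (P i - L)) < k) :
    ∀ i, (w * k = k * (P i / k) ∨ w * k = k * (P i / k) - k) ∧ w * k ≤ L :=
  true_meeting_point_general m w L k P hL1 hL2 hP hD
end
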